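/- Let x ∈ ℝ^m have support N := {i : x_i ≠ 0}, let T_det ⊆ {1,…,m}, Δ_det := N \ T_det, and y = A x + w with ‖w‖₂ ≤ ε. Assume |T_det| ≤ S_T, |Δ_det| ≤ S_Δ, some δ < 1/2 is an S_T-restricted isometry bound for A, and θ is an (S_T, S_Δ)-restricted orthogonality bound for A. Let x̂_det be the LS estimate on T_det from y and α_del ≥ 0. If b₁ > α_del + √2·ε + 2θ·‖x_{Δ_det}‖₂, then every i ∈ T_det with |x_i| ≥ b₁ satisfies |x̂_{det,i}| > α_del, i.e., no such element is falsely deleted by the threshold-α_del deletion step. -/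
import Mathlib


open Finset

attribute [local instance] Classical.propDecidable

/-- Euclidean (ℓ2) norm of a finite real vector. -/
noncomputable def norm2 {k : ℕ} (v : Fin k → ℝ) : ℝ := Real.sqrt (∑ i, v i ^ 2)

/-- ℓ∞ norm (maximum absolute entry) of a finite real vector. -/
noncomputable def normInf {k : ℕ} (v : Fin k → ℝ) : ℝ := ⨆ i, |v i|

/-- Support of a vector, as a finset. -/
noncomputable def spt {k : ℕ} (v : Fin k → ℝ) : Finset (Fin k) :=
  Finset.univ.filter (fun i => v i ≠ 0)

/-- Restriction of a vector to the coordinates indexed by `T` (zero elsewhere). -/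
noncomputable def restr {k : ℕ} (T : Finset (Fin k)) (v : Fin k → ℝ) : Fin k → ℝ :=
  fun i => if i ∈ T then v i else 0

/-- `δ ∈ [0,1)` is an `S`-restricted isometry bound for `A`:
`(1-δ)‖z‖² ≤ ‖Az‖² ≤ (1+δ)‖z‖²` for every `z` with at most `S` nonzero entries. -/
def RIPBound {n m : ℕ} (A : Matrix (Fin n) (Fin m) ℝ) (S : ℕ) (δ : ℝ) : Prop :=
  0 ≤ δ ∧ δ < 1 ∧
    ∀ z : Fin m → ℝ, (spt z).card ≤ S →
      (1 - δ) * (∑ i, z i ^ 2) ≤ (∑ j, (A.mulVec z) j ^ 2) ∧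
      (∑ j, (A.mulVec z) j ^ 2) ≤ (1 + δ) * (∑ i, z i ^ 2)

/-- `θ ≥ 0` is an `(S,S')`-restricted orthogonality bound for `A`:
`|⟨Az, Az'⟩| ≤ θ‖z‖‖z'‖` for all `z, z'` with disjoint supports of cardinalities `≤ S, S'`. -/
def ROBound {n m : ℕ} (A : Matrix (Fin n) (Fin m) ℝ) (S S' : ℕ) (θ : ℝ) : Prop :=
  0 ≤ θ ∧
    ∀ z z' : Fin m → ℝ, Disjoint (spt z) (spt z') →
      (spt z).card ≤ S → (spt z').card ≤ S' →
      |∑ j, (A.mulVec z) j * (A.mulVec z') j| ≤ θ * norm2 z * norm2 z'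

/-- A modified-CS estimate with known part `T`: feasible and with minimal ℓ1 norm outside `T`
among all feasible vectors. -/
def ModCS {n m : ℕ} (A : Matrix (Fin n) (Fin m) ℝ) (y : Fin n → ℝ) (ε : ℝ)
    (T : Finset (Fin m)) (xhat : Fin m → ℝ) : Prop :=
  norm2 (fun j => y j - (A.mulVec xhat) j) ≤ ε ∧
    ∀ β : Fin m → ℝ, norm2 (fun j => y j - (A.mulVec β) j) ≤ ε →
      ∑ i ∈ Tᶜ, |xhat i| ≤ ∑ i ∈ Tᶜ, |β i|

/-- The LS estimate on `T` from `y`: supported on `T` and satisfying the normal equations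
`A_Tᵀ (y - A x̂) = 0` (equivalently `x̂_T = (A_Tᵀ A_T)⁻¹ A_Tᵀ y` when `A_T` has
full column rank). -/
def IsLS {n m : ℕ} (A : Matrix (Fin n) (Fin m) ℝ) (y : Fin n → ℝ)
    (T : Finset (Fin m)) (xhat : Fin m → ℝ) : Prop :=
  (∀ i, i ∉ T → xhat i = 0) ∧
    ∀ i ∈ T, (∑ j, A j i * (y j - (A.mulVec xhat) j)) = 0

/-- `C₁(δ) = 4√(1+δ)/(1-(√2+1)δ)`. -/
noncomputable def C1 (δ : ℝ) : ℝ := 4 * Real.sqrt (1 + δ) / (1 - (Real.sqrt 2 + 1) * δ)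

/-- `C₂(δ) = 2(1+(√2-1)δ)/(1-(√2+1)δ)`. -/
noncomputable def C2 (δ : ℝ) : ℝ := 2 * (1 + (Real.sqrt 2 - 1) * δ) / (1 - (Real.sqrt 2 + 1) * δ)

lemma norm2_nonneg {k : ℕ} (v : Fin k → ℝ) : 0 ≤ norm2 v := Real.sqrt_nonneg _

lemma norm2_sq {k : ℕ} (v : Fin k → ℝ) : norm2 v ^ 2 = ∑ i, v i ^ 2 :=
  Real.sq_sqrt (by positivity)

lemma abs_le_norm2 {k : ℕ} (v : Fin k → ℝ) (i : Fin k) : |v i| ≤ norm2 v := by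
  have h : v i ^ 2 ≤ ∑ j, v j ^ 2 :=
    Finset.single_le_sum (fun j _ => sq_nonneg (v j)) (Finset.mem_univ i)
  calc |v i| = Real.sqrt (v i ^ 2) := (Real.sqrt_sq_eq_abs _).symm
    _ ≤ Real.sqrt (∑ j, v j ^ 2) := Real.sqrt_le_sqrt h

lemma sum_mul_le_norm2 {k : ℕ} (f g : Fin k → ℝ) :
    ∑ i, f i * g i ≤ norm2 f * norm2 g := by
  have hcs := Finset.sum_mul_sq_le_sq_mul_sq Finset.univ f g
  calc ∑ i, f i * g i ≤ |∑ i, f i * g i| := le_abs_self _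
    _ = Real.sqrt ((∑ i, f i * g i) ^ 2) := (Real.sqrt_sq_eq_abs _).symm
    _ ≤ Real.sqrt ((∑ i, f i ^ 2) * ∑ i, g i ^ 2) := Real.sqrt_le_sqrt hcs
    _ = norm2 f * norm2 g := by
        rw [norm2, norm2, ← Real.sqrt_mul (by positivity)]

set_option maxHeartbeats 1000000 in
/-- no-false-deletion condition (Lemma 4). -/
theorem no_false_deletion {n m : ℕ} (A : Matrix (Fin n) (Fin m) ℝ)
    (x : Fin m → ℝ) (w : Fin n → ℝ) (ε δ θ αdel b1 : ℝ) (Tdet : Finset (Fin m))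
    (ST SΔ : ℕ)
    (hw : norm2 w ≤ ε)
    (hT : Tdet.card ≤ ST)
    (hΔ : (spt x \ Tdet).card ≤ SΔ)
    (hδ : δ < 1 / 2)
    (hRIP : RIPBound A ST δ)
    (hθ : ROBound A ST SΔ θ)
    (xdet : Fin m → ℝ)
    (hLS : IsLS A (fun j => (A.mulVec x) j + w j) Tdet xdet)
    (hαdel : 0 ≤ αdel)
    (hb1 : b1 > αdel + Real.sqrt 2 * ε + 2 * θ * norm2 (restr (spt x \ Tdet) x)) :
    ∀ i ∈ Tdet, b1 ≤ |x i| → αdel < |xdet i| := by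
  set xΔ : Fin m → ℝ := restr (spt x \ Tdet) x with hxΔ
  set e : Fin m → ℝ := fun i => if i ∈ Tdet then xdet i - x i else 0 with he
  have hε0 : 0 ≤ ε := le_trans (norm2_nonneg w) hw
  -- support facts
  have hspt_e : spt e ⊆ Tdet := by
    intro i hi
    simp only [spt, Finset.mem_filter] at hi
    by_contra hiT
    exact hi.2 (by simp [he, hiT])
  have hce : (spt e).card ≤ ST := le_trans (Finset.card_le_card hspt_e) hT
  have hspt_Δ : spt xΔ ⊆ spt x \ Tdet := by
    intro i hi
    simp only [spt, Finset.mem_filter] at hi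
    by_contra hiΔ
    exact hi.2 (by simp [hxΔ, restr, hiΔ])
  have hcΔ : (spt xΔ).card ≤ SΔ := le_trans (Finset.card_le_card hspt_Δ) hΔ
  have hdisj : Disjoint (spt e) (spt xΔ) :=
    Finset.disjoint_of_subset_left hspt_e
      (Finset.disjoint_of_subset_right hspt_Δ Finset.disjoint_sdiff)
  -- key identity
  have hkey : ∑ j, (A.mulVec e) j ^ 2
      = (∑ j, (A.mulVec e) j * (A.mulVec xΔ) j) + ∑ j, (A.mulVec e) j * w j := by
    have h0 : ∑ j, (A.mulVec e) j *
        ((A.mulVec x) j + w j - (A.mulVec xdet) j) = 0 := by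
      have hswap : ∑ j, (A.mulVec e) j * ((A.mulVec x) j + w j - (A.mulVec xdet) j)
          = ∑ i, e i * ∑ j, A j i * ((A.mulVec x) j + w j - (A.mulVec xdet) j) := by
        simp only [Matrix.mulVec, dotProduct, Finset.sum_mul, Finset.mul_sum]
        rw [Finset.sum_comm]
        refine Finset.sum_congr rfl fun i _ => Finset.sum_congr rfl fun j _ => by ring
      rw [hswap]
      refine Finset.sum_eq_zero fun i _ => ?_
      by_cases hi : i ∈ Tdet
      · rw [hLS.2 i hi, mul_zero]
      · simp [he, hi]
    have hdiff : ∀ j, (A.mulVec x) j + w j - (A.mulVec xdet) j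
        = (A.mulVec xΔ) j - (A.mulVec e) j + w j := by
      intro j
      have h1 : (A.mulVec x) j - (A.mulVec xdet) j
          = (A.mulVec xΔ) j - (A.mulVec e) j := by
        simp only [Matrix.mulVec, dotProduct]
        rw [← Finset.sum_sub_distrib, ← Finset.sum_sub_distrib]
        refine Finset.sum_congr rfl fun i _ => ?_
        have hxe : x i - xdet i = xΔ i - e i := by
          by_cases hi : i ∈ Tdet
          · have hiΔ : i ∉ spt x \ Tdet := by simp [hi]
            simp [he, hxΔ, restr, hi, hiΔ]
          · have hx0 : xdet i = 0 := hLS.1 i hi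
            by_cases hxi : x i = 0
            · have hiΔ : i ∉ spt x \ Tdet := by simp [spt, hxi]
              simp [he, hxΔ, restr, hi, hiΔ, hx0, hxi]
            · have hiΔ : i ∈ spt x \ Tdet := by simp [spt, hxi, hi]
              simp [he, hxΔ, restr, hi, hiΔ, hx0]
        calc A j i * x i - A j i * xdet i = A j i * (x i - xdet i) := by ring
          _ = A j i * (xΔ i - e i) := by rw [hxe]
          _ = A j i * xΔ i - A j i * e i := by ring
      linarith
    have h2 : ∑ j, (A.mulVec e) j * ((A.mulVec x) j + w j - (A.mulVec xdet) j)
        = (∑ j, (A.mulVec e) j * (A.mulVec xΔ) j) - (∑ j, (A.mulVec e) j ^ 2)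
          + ∑ j, (A.mulVec e) j * w j := by
      rw [← Finset.sum_sub_distrib, ← Finset.sum_add_distrib]
      refine Finset.sum_congr rfl fun j _ => ?_
      rw [hdiff j]; ring
    rw [h2] at h0
    linarith
  -- bounds
  set u := norm2 e with hu
  set a := norm2 (A.mulVec e) with ha
  set c := θ * norm2 xΔ with hc
  have hu0 : 0 ≤ u := norm2_nonneg _
  have ha0 : 0 ≤ a := norm2_nonneg _
  have hc0 : 0 ≤ c := mul_nonneg hθ.1 (norm2_nonneg _)
  have hu2 : u ^ 2 = ∑ i, e i ^ 2 := norm2_sq e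
  have ha2 : a ^ 2 = ∑ j, (A.mulVec e) j ^ 2 := norm2_sq _
  have hro : ∑ j, (A.mulVec e) j * (A.mulVec xΔ) j ≤ c * u := by
    have := hθ.2 e xΔ hdisj hce hcΔ
    have h := le_trans (le_abs_self _) this
    rw [hc, hu]; linarith
  have hcw : ∑ j, (A.mulVec e) j * w j ≤ a * ε := by
    have h1 := sum_mul_le_norm2 (A.mulVec e) w
    have h2 : a * norm2 w ≤ a * ε := mul_le_mul_of_nonneg_left hw ha0
    linarith
  have hA2 : a ^ 2 ≤ c * u + a * ε := by rw [ha2, hkey]; linarith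
  have hrip : (1 - δ) * u ^ 2 ≤ a ^ 2 := by
    rw [hu2, ha2]; exact (hRIP.2.2 e hce).1
  -- algebra: u ≤ √2 ε + 2 c
  have hs2 : Real.sqrt 2 ^ 2 = 2 := Real.sq_sqrt (by norm_num)
  have hs2nn : (0:ℝ) ≤ Real.sqrt 2 := Real.sqrt_nonneg 2
  have husa : u ≤ Real.sqrt 2 * a := by
    have h : u ^ 2 ≤ 2 * a ^ 2 := by
      have h' : (1/2 : ℝ) * u ^ 2 ≤ (1 - δ) * u ^ 2 :=
        mul_le_mul_of_nonneg_right (by linarith) (sq_nonneg u)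
      linarith
    calc u = Real.sqrt (u ^ 2) := (Real.sqrt_sq hu0).symm
      _ ≤ Real.sqrt (2 * a ^ 2) := Real.sqrt_le_sqrt h
      _ = Real.sqrt 2 * a := by
          rw [Real.sqrt_mul (by norm_num), Real.sqrt_sq ha0]
  have haux : u ≤ Real.sqrt 2 * ε + 2 * c := by
    rcases eq_or_lt_of_le ha0 with h | h
    · have hu0' : u ≤ 0 := by rw [← h] at husa; simpa using husa
      have h1 : 0 ≤ Real.sqrt 2 * ε := mul_nonneg hs2nn hε0
      linarith
    · have hcu : c * u ≤ c * (Real.sqrt 2 * a) := mul_le_mul_of_nonneg_left husa hc0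
      have haa : a * a ≤ a * (ε + Real.sqrt 2 * c) := by nlinarith [hA2, hcu]
      have ha' : a ≤ ε + Real.sqrt 2 * c := le_of_mul_le_mul_left haa h
      have h2 : Real.sqrt 2 * a ≤ Real.sqrt 2 * (ε + Real.sqrt 2 * c) :=
        mul_le_mul_of_nonneg_left ha' hs2nn
      nlinarith [hs2]
  -- conclude
  intro i hi hbi
  have hei : e i = xdet i - x i := by simp [he, hi]
  have h1 : |x i - xdet i| ≤ u := by
    have := abs_le_norm2 e i
    rw [hei, abs_sub_comm] at this
    exact this
  have h2 : |x i| - |xdet i| ≤ |x i - xdet i| := abs_sub_abs_le_abs_sub _ _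
  have hb1' : αdel + Real.sqrt 2 * ε + 2 * c < b1 := by
    rw [hc]; linarith [hb1]
  linarith
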